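/- arXiv:2407.20370 — 3 statements merged into one kernel-verified Lean document; each statement's English description precedes it below -/
import Mathlib

section
/- If L is a Latin square of order n with n ≥ 2, then n² − 3n + 3 ≤ b_L(H_L) ≤ n² − 3n + 2 + ⌊log₂ n⌋, where b_L(H_L) is the lazy burning number of the hypergraph H_L. -/
open Finset

/-- An entry of a Latin square with rows/columns/symbols indexed by `X`. -/
abbrev Entry (X : Type*) := X × X × X

/-- A line of a Latin square: a tag (0 = row, 1 = column, 2 = symbol) and an index. -/
abbrev Line (X : Type*) := Fin 3 × X

/-- The entry `e` lies on the line `ℓ`. -/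
def onLine {X : Type*} (e : Entry X) (ℓ : Line X) : Prop :=
  (ℓ.1 = 0 ∧ e.1 = ℓ.2) ∨ (ℓ.1 = 1 ∧ e.2.1 = ℓ.2) ∨ (ℓ.1 = 2 ∧ e.2.2 = ℓ.2)

instance {X : Type*} [DecidableEq X] (e : Entry X) (ℓ : Line X) : Decidable (onLine e ℓ) := by
  unfold onLine; infer_instance

/-- `L` is a Latin square (on the full index set `X`). -/
def IsLatin {X : Type*} (L : Finset (Entry X)) : Prop :=
  (∀ r c : X, ∃! s : X, (r, c, s) ∈ L) ∧
  (∀ r s : X, ∃! c : X, (r, c, s) ∈ L) ∧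
  (∀ c s : X, ∃! r : X, (r, c, s) ∈ L)

/-- Lazy-burning closure in the hypergraph `H_L`: vertices are the entries of `L`,
hyperedges are the lines of `L`; a vertex burns if it is the unique unburned vertex of
a hyperedge of size at least 2. -/
inductive BurnedHL {X : Type*} [DecidableEq X] (L S : Finset (Entry X)) : Entry X → Prop
  | init {e : Entry X} : e ∈ S → BurnedHL L S e
  | prop {e : Entry X} (ℓ : Line X) : e ∈ L → onLine e ℓ →
      2 ≤ (L.filter (fun f => onLine f ℓ)).card →
      (∀ f ∈ L, onLine f ℓ → f ≠ e → BurnedHL L S f) → BurnedHL L S e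

/-- `S` is a lazy burning set of the hypergraph `H_L`. -/
def IsLazyBurningSetHL {X : Type*} [DecidableEq X] (L S : Finset (Entry X)) : Prop :=
  S ⊆ L ∧ ∀ e ∈ L, BurnedHL L S e

/-- The lazy burning number of `H_L`. -/
noncomputable def lbHL {X : Type*} [DecidableEq X] (L : Finset (Entry X)) : ℕ :=
  sInf {k | ∃ S : Finset (Entry X), IsLazyBurningSetHL L S ∧ S.card = k}

/-- A cover of `L`: a set of entries of `L` meeting every line. -/
def IsCover {X : Type*} (L C : Finset (Entry X)) : Prop :=
  C ⊆ L ∧ ∀ ℓ : Line X, ∃ e ∈ C, onLine e ℓ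

/-- A weak cover-sequence of `L`: each entry lies on a line containing no earlier entry. -/
def IsWeakCoverSeq {X : Type*} (L : Finset (Entry X)) (es : List (Entry X)) : Prop :=
  (∀ e ∈ es, e ∈ L) ∧
  ∀ i : Fin es.length, ∃ ℓ : Line X, onLine (es.get i) ℓ ∧
    ∀ j : Fin es.length, (j : ℕ) < (i : ℕ) → ¬ onLine (es.get j) ℓ

/-- A cover-sequence of `L`: a weak cover-sequence whose entries form a cover. -/
def IsCoverSeq {X : Type*} (L : Finset (Entry X)) (es : List (Entry X)) : Prop :=
  IsWeakCoverSeq L es ∧ ∀ ℓ : Line X, ∃ e ∈ es, onLine e ℓ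

/-- `mcs L`: the maximum length of a cover-sequence of `L`. -/
noncomputable def mcs {X : Type*} (L : Finset (Entry X)) : ℕ :=
  sSup {d | ∃ es : List (Entry X), IsCoverSeq L es ∧ es.length = d}

/-- `T` is a subsquare of `L`: `T = L ∩ (R × C × S)` with `|R| = |C| = |S|`, and `T`
is itself a Latin square on rows `R`, columns `C`, symbols `S`. -/
def IsSubsquare {X : Type*} [DecidableEq X] (L T : Finset (Entry X)) : Prop :=
  ∃ R C S : Finset X, R.card = C.card ∧ C.card = S.card ∧
    T = L.filter (fun e => e.1 ∈ R ∧ e.2.1 ∈ C ∧ e.2.2 ∈ S) ∧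
    (∀ r ∈ R, ∀ c ∈ C, ∃! s, s ∈ S ∧ (r, c, s) ∈ T) ∧
    (∀ r ∈ R, ∀ s ∈ S, ∃! c, c ∈ C ∧ (r, c, s) ∈ T) ∧
    (∀ c ∈ C, ∀ s ∈ S, ∃! r, r ∈ R ∧ (r, c, s) ∈ T)

/-- `Sq 0 ⊆ Sq 1 ⊆ ⋯ ⊆ Sq α` is a connected chain of subsquares of `L`, from the empty
subsquare through a single entry up to `L` itself. -/
def IsConnectedChain {X : Type*} [DecidableEq X] (L : Finset (Entry X)) (α : ℕ)
    (Sq : ℕ → Finset (Entry X)) : Prop :=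
  1 ≤ α ∧ Sq 0 = ∅ ∧ (Sq 1).card = 1 ∧ Sq α = L ∧
  (∀ i ≤ α, IsSubsquare L (Sq i)) ∧
  (∀ i < α, Sq i ⊆ Sq (i + 1)) ∧
  (∀ i, 1 ≤ i → i ≤ α → ∃ ℓ : Line X,
      (∃ e ∈ Sq i, onLine e ℓ) ∧ ¬(∃ e ∈ Sq (i - 1), onLine e ℓ) ∧
      (∀ T, IsSubsquare L T → Sq (i - 1) ⊆ T → (∃ e ∈ T, onLine e ℓ) → Sq i ⊆ T))

/-- `scc L`: the minimum length of a connected chain of subsquares of `L`. -/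
noncomputable def scc {X : Type*} [DecidableEq X] (L : Finset (Entry X)) : ℕ :=
  sInf {α | ∃ Sq : ℕ → Finset (Entry X), IsConnectedChain L α Sq}

/-- Lazy-burning closure in the 3-uniform hypergraph `H^L`: vertices are the lines of `L`,
and each entry of `L` induces the hyperedge consisting of its three lines. -/
inductive BurnedH3 {X : Type*} (L : Finset (Entry X)) (S : Finset (Line X)) : Line X → Prop
  | init {ℓ : Line X} : ℓ ∈ S → BurnedH3 L S ℓ
  | prop {ℓ : Line X} (e : Entry X) : e ∈ L → onLine e ℓ →
      (∀ ℓ' : Line X, onLine e ℓ' → ℓ' ≠ ℓ → BurnedH3 L S ℓ') → BurnedH3 L S ℓ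

/-- `S` is a lazy burning set of the 3-uniform hypergraph `H^L`. -/
def IsLazyBurningSetH3 {X : Type*} (L : Finset (Entry X)) (S : Finset (Line X)) : Prop :=
  ∀ ℓ : Line X, BurnedH3 L S ℓ

/-- The lazy burning number of `H^L`. -/
noncomputable def lbH3 {X : Type*} (L : Finset (Entry X)) : ℕ :=
  sInf {k | ∃ S : Finset (Line X), IsLazyBurningSetH3 L S ∧ S.card = k}

/-!
The quantity to watch is `lineCount U`, the number of lines meeting a set `U` of entries.

Lower bound: if `S` is a lazy burning set, unburn the entries of `U = L \ S` in reverse order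
of burning. Each entry loses the line that burned it, so `lineCount` drops at each step, while
the last two burned entries, sharing at most one line, meet at least five lines. Hence
`|U| + 3 ≤ 3n`.

Upper bound: if some line through `e` avoids `U` and `L \ U` burns, so does `L \ (U ∪ {e})`.
Starting from one entry (`lineCount - |U| = 2`), add entries meeting exactly one new line
until the lines met span a subsquare; then add an entry in a new row, paying one, which at
least doubles the order of the next subsquare reached. This happens at most `log₂ n` times.
-/

variable {X : Type*}

@[simp] theorem onLine_row (e : Entry X) (x : X) : onLine e (0, x) ↔ e.1 = x := by
  simp [onLine]

@[simp] theorem onLine_col (e : Entry X) (x : X) : onLine e (1, x) ↔ e.2.1 = x := by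
  simp [onLine]

@[simp] theorem onLine_sym (e : Entry X) (x : X) : onLine e (2, x) ↔ e.2.2 = x := by
  simp [onLine]

section Latin

variable {L : Finset (Entry X)}

theorem IsLatin.eq_of_row_col (hL : IsLatin L) {e f : Entry X} (he : e ∈ L) (hf : f ∈ L)
    (h₁ : e.1 = f.1) (h₂ : e.2.1 = f.2.1) : e = f := by
  obtain ⟨r, c, s⟩ := e
  obtain ⟨r', c', s'⟩ := f
  simp only at h₁ h₂
  subst h₁ h₂
  rw [(hL.1 r c).unique he hf]

theorem IsLatin.eq_of_row_sym (hL : IsLatin L) {e f : Entry X} (he : e ∈ L) (hf : f ∈ L)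
    (h₁ : e.1 = f.1) (h₃ : e.2.2 = f.2.2) : e = f := by
  obtain ⟨r, c, s⟩ := e
  obtain ⟨r', c', s'⟩ := f
  simp only at h₁ h₃
  subst h₁ h₃
  rw [(hL.2.1 r s).unique he hf]

theorem IsLatin.eq_of_col_sym (hL : IsLatin L) {e f : Entry X} (he : e ∈ L) (hf : f ∈ L)
    (h₂ : e.2.1 = f.2.1) (h₃ : e.2.2 = f.2.2) : e = f := by
  obtain ⟨r, c, s⟩ := e
  obtain ⟨r', c', s'⟩ := f
  simp only at h₂ h₃
  subst h₂ h₃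
  rw [(hL.2.2 c s).unique he hf]

noncomputable def IsLatin.sym (hL : IsLatin L) (r c : X) : X := (hL.1 r c).exists.choose

theorem IsLatin.sym_mem (hL : IsLatin L) (r c : X) : (r, c, hL.sym r c) ∈ L :=
  (hL.1 r c).exists.choose_spec

theorem IsLatin.sym_eq (hL : IsLatin L) {r c s : X} (h : (r, c, s) ∈ L) : hL.sym r c = s :=
  (hL.1 r c).unique (hL.sym_mem r c) h

theorem IsLatin.sym_injective (hL : IsLatin L) (r : X) : Function.Injective (hL.sym r) :=
  fun c c' h => congrArg (·.2.1) (hL.eq_of_row_sym (hL.sym_mem r c) (hL.sym_mem r c') rfl h)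

theorem IsLatin.sym_injective_left (hL : IsLatin L) (c : X) :
    Function.Injective (fun r => hL.sym r c) :=
  fun r r' h => congrArg (·.1) (hL.eq_of_col_sym (hL.sym_mem r c) (hL.sym_mem r' c) rfl h)

variable [Fintype X]

theorem IsLatin.card_eq (hL : IsLatin L) : #L = Fintype.card X ^ 2 := by
  calc #L = #(univ : Finset (X × X)) :=
        card_bij' (fun e _ => (e.1, e.2.1)) (fun p _ => (p.1, p.2, hL.sym p.1 p.2))
          (by simp) (fun p _ => hL.sym_mem p.1 p.2)
          (fun e he => hL.eq_of_row_col (hL.sym_mem _ _) he rfl rfl) (by simp)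
    _ = Fintype.card X ^ 2 := by simp [sq]

theorem IsLatin.two_le_card_filter_onLine [DecidableEq X] (hL : IsLatin L) (hn : 2 ≤ Fintype.card X)
    (ℓ : Line X) : 2 ≤ #(L.filter (onLine · ℓ)) := by
  obtain ⟨x, y, hxy⟩ := Fintype.exists_pair_of_one_lt_card hn
  obtain ⟨t, z⟩ := ℓ
  refine one_lt_card.2 ?_
  fin_cases t
  · exact ⟨(z, x, hL.sym z x), by simp [hL.sym_mem], (z, y, hL.sym z y), by simp [hL.sym_mem],
      by simp [hxy]⟩
  · exact ⟨(x, z, hL.sym x z), by simp [hL.sym_mem], (y, z, hL.sym y z), by simp [hL.sym_mem],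
      by simp [hxy]⟩
  · obtain ⟨c, hc⟩ := (hL.2.1 x z).exists
    obtain ⟨c', hc'⟩ := (hL.2.1 y z).exists
    exact ⟨(x, c, z), by simp [hc], (y, c', z), by simp [hc'], by simp [hxy]⟩

end Latin

section LineCount

variable [DecidableEq X]

def rowsOf (U : Finset (Entry X)) : Finset X := U.image (·.1)

def colsOf (U : Finset (Entry X)) : Finset X := U.image (·.2.1)

def symsOf (U : Finset (Entry X)) : Finset X := U.image (·.2.2)

/-- The number of lines meeting `U`. -/
def lineCount (U : Finset (Entry X)) : ℕ := #(rowsOf U) + #(colsOf U) + #(symsOf U)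

variable {U V : Finset (Entry X)} {e : Entry X}

theorem mem_rowsOf_of_mem (he : e ∈ U) : e.1 ∈ rowsOf U := mem_image_of_mem _ he

theorem mem_colsOf_of_mem (he : e ∈ U) : e.2.1 ∈ colsOf U := mem_image_of_mem _ he

theorem colsOf_mono (h : U ⊆ V) : colsOf U ⊆ colsOf V := image_subset_image h

theorem symsOf_mono (h : U ⊆ V) : symsOf U ⊆ symsOf V := image_subset_image h

theorem lineCount_insert (e : Entry X) (U : Finset (Entry X)) :
    lineCount (insert e U) = lineCount U + ((if e.1 ∈ rowsOf U then 0 else 1) +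
      (if e.2.1 ∈ colsOf U then 0 else 1) + (if e.2.2 ∈ symsOf U then 0 else 1)) := by
  simp only [lineCount, rowsOf, colsOf, symsOf, image_insert, card_insert_eq_ite]
  split_ifs <;> simp_all <;> omega

theorem lineCount_singleton (e : Entry X) : lineCount {e} = 3 := by
  simp [lineCount, rowsOf, colsOf, symsOf]

theorem lineCount_lt_lineCount_insert_iff :
    lineCount U < lineCount (insert e U) ↔
      e.1 ∉ rowsOf U ∨ e.2.1 ∉ colsOf U ∨ e.2.2 ∉ symsOf U := by
  rw [lineCount_insert]
  split_ifs <;> simp_all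

theorem lineCount_le [Fintype X] (U : Finset (Entry X)) : lineCount U ≤ 3 * Fintype.card X := by
  have := card_le_univ (rowsOf U)
  have := card_le_univ (colsOf U)
  have := card_le_univ (symsOf U)
  unfold lineCount
  omega

theorem IsLatin.five_le_lineCount_pair {L : Finset (Entry X)} (hL : IsLatin L) {a b : Entry X}
    (ha : a ∈ L) (hb : b ∈ L) (hab : a ≠ b) : 5 ≤ lineCount {a, b} := by
  rw [lineCount_insert, lineCount_singleton]
  simp only [rowsOf, colsOf, symsOf, image_singleton, mem_singleton]
  split_ifs <;>
    first
    | omega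
    | exact absurd (hL.eq_of_row_col ha hb ‹_› ‹_›) hab
    | exact absurd (hL.eq_of_row_sym ha hb ‹_› ‹_›) hab
    | exact absurd (hL.eq_of_col_sym ha hb ‹_› ‹_›) hab

theorem lineCount_erase_lt {ℓ : Line X} (he : e ∈ U) (heℓ : onLine e ℓ)
    (hℓ : ∀ f ∈ U, onLine f ℓ → f = e) : lineCount (U.erase e) < lineCount U := by
  conv_rhs => rw [← insert_erase he]
  refine lineCount_lt_lineCount_insert_iff.2 ?_
  obtain ⟨t, x⟩ := ℓ
  have hne : ∀ f ∈ U.erase e, f ≠ e := fun f hf => ne_of_mem_erase hf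
  fin_cases t <;> simp only [Fin.zero_eta, Fin.mk_one, Fin.reduceFinMk, onLine_row, onLine_col,
    onLine_sym] at heℓ hℓ <;> subst heℓ
  · left
    simp only [rowsOf, mem_image, not_exists, not_and]
    exact fun f hf hfe => hne f hf (hℓ f (mem_of_mem_erase hf) hfe)
  · right; left
    simp only [colsOf, mem_image, not_exists, not_and]
    exact fun f hf hfe => hne f hf (hℓ f (mem_of_mem_erase hf) hfe)
  · right; right
    simp only [symsOf, mem_image, not_exists, not_and]
    exact fun f hf hfe => hne f hf (hℓ f (mem_of_mem_erase hf) hfe)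

end LineCount

section Burning

variable [DecidableEq X] {L S T U : Finset (Entry X)} {e : Entry X}

theorem BurnedHL.trans (hST : ∀ f ∈ S, BurnedHL L T f) (h : BurnedHL L S e) :
    BurnedHL L T e := by
  induction h with
  | init hf => exact hST _ hf
  | prop ℓ he hon hcard _ ih => exact .prop ℓ he hon hcard ih

theorem BurnedHL.mono (hST : S ⊆ T) (h : BurnedHL L S e) : BurnedHL L T e :=
  h.trans fun _ hf => .init (hST hf)

theorem BurnedHL.mem_or_exists_burnable (h : BurnedHL L S e) :
    e ∈ S ∨ ∃ f ∈ L, f ∉ S ∧ ∃ ℓ, onLine f ℓ ∧ ∀ g ∈ L, onLine g ℓ → g ≠ f → g ∈ S := by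
  induction h with
  | init he => exact .inl he
  | @prop e ℓ he hon _ _ ih =>
    by_cases hrest : ∀ g ∈ L, onLine g ℓ → g ≠ e → g ∈ S
    · by_cases heS : e ∈ S
      · exact .inl heS
      · exact .inr ⟨e, he, heS, ℓ, hon, hrest⟩
    · push Not at hrest
      obtain ⟨g, hg, hgℓ, hge, hgS⟩ := hrest
      exact .inr ((ih g hg hgℓ hge).resolve_left hgS)

theorem isLazyBurningSetHL_self (L : Finset (Entry X)) : IsLazyBurningSetHL L L :=
  ⟨subset_rfl, fun _ he => .init he⟩

theorem lbHL_le (h : IsLazyBurningSetHL L S) : lbHL L ≤ #S :=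
  Nat.sInf_le ⟨S, h, rfl⟩

theorem exists_card_eq_lbHL (L : Finset (Entry X)) :
    ∃ S, IsLazyBurningSetHL L S ∧ #S = lbHL L :=
  Nat.sInf_mem (s := {k | ∃ S, IsLazyBurningSetHL L S ∧ #S = k})
    ⟨#L, L, isLazyBurningSetHL_self L, rfl⟩

theorem IsLazyBurningSetHL.sdiff_insert {ℓ : Line X} (hU : IsLazyBurningSetHL L (L \ U))
    (he : e ∈ L) (heℓ : onLine e ℓ) (hℓ : 2 ≤ #(L.filter (onLine · ℓ)))
    (hUℓ : ∀ f ∈ U, ¬ onLine f ℓ) : IsLazyBurningSetHL L (L \ insert e U) := by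
  have hburn : BurnedHL L (L \ insert e U) e :=
    .prop ℓ he heℓ hℓ fun f hf hfℓ hfe =>
      .init (mem_sdiff.2 ⟨hf, by simpa [hfe] using fun hfU => hUℓ f hfU hfℓ⟩)
  refine ⟨sdiff_subset, fun g hg => (hU.2 g hg).trans fun f hf => ?_⟩
  by_cases hfe : f = e
  · exact hfe ▸ hburn
  · exact .init (by simp_all)

end Burning

section LowerBound

variable [DecidableEq X] {L : Finset (Entry X)}

theorem IsLatin.card_add_three_le_lineCount (hL : IsLatin L) {U : Finset (Entry X)}
    (hUL : U ⊆ L) (hU : 2 ≤ #U) (hburn : ∀ e ∈ U, BurnedHL L (L \ U) e) :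
    #U + 3 ≤ lineCount U := by
  induction hk : #U using Nat.strong_induction_on generalizing U with
  | _ k ih =>
  obtain hU2 | hU3 := hU.eq_or_lt
  · obtain ⟨a, b, hab, rfl⟩ := card_eq_two.1 hU2.symm
    have := hL.five_le_lineCount_pair (hUL (by simp)) (hUL (by simp)) hab
    omega
  obtain ⟨u, hu⟩ := card_pos.1 (by omega : 0 < #U)
  obtain hmem | ⟨e, heL, heU, ℓ, heℓ, hℓ⟩ := (hburn u hu).mem_or_exists_burnable
  · exact absurd hmem (by simp [hu])
  replace heU : e ∈ U := by simpa [heL] using heU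
  have hℓU : ∀ f ∈ U, onLine f ℓ → f = e := fun f hf hfℓ => by
    by_contra hfe
    exact (mem_sdiff.1 (hℓ f (hUL hf) hfℓ hfe)).2 hf
  have hlt := lineCount_erase_lt heU heℓ hℓU
  have hcard := card_erase_of_mem heU
  have := ih (k - 1) (by omega) ((erase_subset e U).trans hUL) (by omega)
    (fun f hf => (hburn f (mem_of_mem_erase hf)).mono
      (sdiff_subset_sdiff subset_rfl (erase_subset e U))) (by omega)
  omega

theorem IsLatin.card_sq_add_three_le_lbHL [Fintype X] (hL : IsLatin L)
    (hn : 2 ≤ Fintype.card X) : Fintype.card X ^ 2 + 3 ≤ lbHL L + 3 * Fintype.card X := by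
  obtain ⟨S, hS, hcard⟩ := exists_card_eq_lbHL L
  have hsplit : #S + #(L \ S) = Fintype.card X ^ 2 := by
    rw [← hL.card_eq, card_sdiff_of_subset hS.1]
    have := card_le_card hS.1
    omega
  by_cases hU : 2 ≤ #(L \ S)
  · have := hL.card_add_three_le_lineCount sdiff_subset hU
      (by rw [Finset.sdiff_sdiff_eq_self hS.1]; exact fun e he => hS.2 e (mem_sdiff.1 he).1)
    have := lineCount_le (L \ S)
    omega
  · omega

end LowerBound

section UpperBound

variable [DecidableEq X] {L U V : Finset (Entry X)} {e : Entry X}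

/-- The rows, columns and symbols met by a nonempty saturated `U` span a subsquare of `L`. -/
def IsSaturated (L U : Finset (Entry X)) : Prop :=
  ∀ e ∈ L, lineCount (insert e U) ≠ lineCount U + 1

theorem IsSaturated.sym_mem (hU : IsSaturated L U) (he : e ∈ L) (hr : e.1 ∈ rowsOf U)
    (hc : e.2.1 ∈ colsOf U) : e.2.2 ∈ symsOf U := by
  by_contra hs
  exact hU e he (by simp [lineCount_insert, hr, hc, hs])

theorem IsSaturated.col_mem (hU : IsSaturated L U) (he : e ∈ L) (hr : e.1 ∈ rowsOf U)
    (hs : e.2.2 ∈ symsOf U) : e.2.1 ∈ colsOf U := by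
  by_contra hc
  exact hU e he (by simp [lineCount_insert, hr, hc, hs])

theorem IsSaturated.row_mem (hU : IsSaturated L U) (he : e ∈ L) (hc : e.2.1 ∈ colsOf U)
    (hs : e.2.2 ∈ symsOf U) : e.1 ∈ rowsOf U := by
  by_contra hr
  exact hU e he (by simp [lineCount_insert, hr, hc, hs])

theorem IsSaturated.card_colsOf (hL : IsLatin L) (hU : IsSaturated L U) (hne : U.Nonempty) :
    #(colsOf U) = #(symsOf U) := by
  obtain ⟨⟨r, c₀, s₀⟩, h₀⟩ := hne
  have hr : r ∈ rowsOf U := mem_rowsOf_of_mem h₀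
  have himage : (colsOf U).image (hL.sym r) = symsOf U := by
    ext s
    simp only [mem_image]
    constructor
    · rintro ⟨c, hc, rfl⟩
      exact hU.sym_mem (hL.sym_mem r c) hr hc
    · intro hs
      obtain ⟨c, hc⟩ := (hL.2.1 r s).exists
      exact ⟨c, hU.col_mem hc hr hs, hL.sym_eq hc⟩
  rw [← himage, card_image_of_injective _ (hL.sym_injective r)]

theorem IsSaturated.card_rowsOf (hL : IsLatin L) (hU : IsSaturated L U) (hne : U.Nonempty) :
    #(rowsOf U) = #(symsOf U) := by
  obtain ⟨⟨r₀, c, s₀⟩, h₀⟩ := hne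
  have hc : c ∈ colsOf U := mem_colsOf_of_mem h₀
  have himage : (rowsOf U).image (fun r => hL.sym r c) = symsOf U := by
    ext s
    simp only [mem_image]
    constructor
    · rintro ⟨r, hr, rfl⟩
      exact hU.sym_mem (hL.sym_mem r c) hr hc
    · intro hs
      obtain ⟨r, hr⟩ := (hL.2.2 c s).exists
      exact ⟨r, hU.row_mem hr hc hs, hL.sym_eq hr⟩
  rw [← himage, card_image_of_injective _ (hL.sym_injective_left c)]

/-- A new row `r` of `V` brings, over the columns of `U`, as many new symbols. -/
theorem IsSaturated.card_symsOf_add_card_colsOf_le (hL : IsLatin L) (hU : IsSaturated L U)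
    (hV : IsSaturated L V) (hUV : U ⊆ V) {r : X} (hrV : r ∈ rowsOf V) (hrU : r ∉ rowsOf U) :
    #(symsOf U) + #(colsOf U) ≤ #(symsOf V) := by
  have hdisj : Disjoint (symsOf U) ((colsOf U).image (hL.sym r)) := by
    simp only [disjoint_right, mem_image]
    rintro _ ⟨c, hc, rfl⟩ hs
    exact hrU (hU.row_mem (hL.sym_mem r c) hc hs)
  calc #(symsOf U) + #(colsOf U)
      = #(symsOf U ∪ (colsOf U).image (hL.sym r)) := by
        rw [card_union_of_disjoint hdisj, card_image_of_injective _ (hL.sym_injective r)]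
    _ ≤ #(symsOf V) := card_le_card <| union_subset (symsOf_mono hUV) <| image_subset_iff.2
        fun c hc => hV.sym_mem (hL.sym_mem r c) hrV (colsOf_mono hUV hc)

variable [Fintype X]

theorem IsLatin.isLazyBurningSetHL_sdiff_insert (hL : IsLatin L) (hn : 2 ≤ Fintype.card X)
    (hU : IsLazyBurningSetHL L (L \ U)) (he : e ∈ L) (hnew : lineCount U < lineCount (insert e U)) :
    IsLazyBurningSetHL L (L \ insert e U) := by
  have hℓ := hL.two_le_card_filter_onLine hn
  rcases lineCount_lt_lineCount_insert_iff.1 hnew with h | h | h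
  · exact hU.sdiff_insert he ((onLine_row e _).2 rfl) (hℓ _) fun f hf hfe =>
      h (((onLine_row f _).1 hfe) ▸ mem_rowsOf_of_mem hf)
  · exact hU.sdiff_insert he ((onLine_col e _).2 rfl) (hℓ _) fun f hf hfe =>
      h (((onLine_col f _).1 hfe) ▸ mem_colsOf_of_mem hf)
  · exact hU.sdiff_insert he ((onLine_sym e _).2 rfl) (hℓ _) fun f hf hfe =>
      h (((onLine_sym f _).1 hfe) ▸ mem_image_of_mem _ hf)

/-- Greedily add entries meeting exactly one new line. -/
theorem IsLatin.exists_saturated_superset (hL : IsLatin L) (hn : 2 ≤ Fintype.card X)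
    (hUL : U ⊆ L) (hU : IsLazyBurningSetHL L (L \ U)) :
    ∃ V, U ⊆ V ∧ V ⊆ L ∧ IsLazyBurningSetHL L (L \ V) ∧ IsSaturated L V ∧
      lineCount V + #U = lineCount U + #V := by
  induction hk : #(L \ U) using Nat.strong_induction_on generalizing U with
  | _ k ih =>
  by_cases hsat : IsSaturated L U
  · exact ⟨U, subset_rfl, hUL, hU, hsat, rfl⟩
  obtain ⟨e, he, hcount⟩ : ∃ e ∈ L, lineCount (insert e U) = lineCount U + 1 := by
    simpa [IsSaturated] using hsat
  have heU : e ∉ U := fun h => by rw [insert_eq_of_mem h] at hcount; omega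
  have hlt : #(L \ insert e U) < k := by
    rw [← hk, sdiff_insert]
    exact card_erase_lt_of_mem (mem_sdiff.2 ⟨he, heU⟩)
  obtain ⟨V, hUV, hVL, hV, hVsat, hVcount⟩ := ih _ hlt (insert_subset he hUL)
    (hL.isLazyBurningSetHL_sdiff_insert hn hU he (by omega)) rfl
  refine ⟨V, (subset_insert e U).trans hUV, hVL, hV, hVsat, ?_⟩
  rw [card_insert_of_notMem heU] at hVcount
  omega

/-- Add the entry in a missing row and an old column, which meets a new row and a new symbol,
and saturate. -/
theorem IsLatin.exists_saturated_doubling (hL : IsLatin L) (hn : 2 ≤ Fintype.card X)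
    (hUL : U ⊆ L) (hU : IsLazyBurningSetHL L (L \ U)) (hsat : IsSaturated L U)
    (hne : U.Nonempty) (hlt : #(symsOf U) < Fintype.card X) :
    ∃ V, V ⊆ L ∧ IsLazyBurningSetHL L (L \ V) ∧ IsSaturated L V ∧
      lineCount V + #U ≤ lineCount U + #V + 1 ∧ 2 * #(symsOf U) ≤ #(symsOf V) := by
  obtain ⟨e₀, he₀⟩ := hne
  obtain ⟨r, hr⟩ : ∃ r, r ∉ rowsOf U := by
    by_contra! h
    have := hsat.card_rowsOf hL ⟨e₀, he₀⟩
    rw [eq_univ_of_forall h, card_univ] at this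
    omega
  have hc : e₀.2.1 ∈ colsOf U := mem_colsOf_of_mem he₀
  have hs : hL.sym r e₀.2.1 ∉ symsOf U := fun hs => hr (hsat.row_mem (hL.sym_mem _ _) hc hs)
  have he := hL.sym_mem r e₀.2.1
  have hcount : lineCount (insert (r, e₀.2.1, hL.sym r e₀.2.1) U) = lineCount U + 2 := by
    simp [lineCount_insert, hr, hc, hs]
  have heU : (r, e₀.2.1, hL.sym r e₀.2.1) ∉ U := fun h => hr (mem_rowsOf_of_mem h)
  obtain ⟨V, hUV, hVL, hV, hVsat, hVcount⟩ := hL.exists_saturated_superset hn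
    (insert_subset he hUL) (hL.isLazyBurningSetHL_sdiff_insert hn hU he (by omega))
  have hdouble := hsat.card_symsOf_add_card_colsOf_le hL hVsat ((subset_insert _ U).trans hUV)
    (mem_rowsOf_of_mem (hUV (mem_insert_self _ U))) hr
  have hcols := hsat.card_colsOf hL ⟨e₀, he₀⟩
  rw [card_insert_of_notMem heU] at hVcount
  exact ⟨V, hVL, hV, hVsat, by omega, by omega⟩

theorem IsLatin.exists_burning_sdiff_of_isSaturated (hL : IsLatin L) (hn : 2 ≤ Fintype.card X)
    (hUL : U ⊆ L) (hU : IsLazyBurningSetHL L (L \ U)) (hsat : IsSaturated L U)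
    (hne : U.Nonempty) (hcount : lineCount U ≤ #U + 2 + Nat.log 2 #(symsOf U)) :
    ∃ V ⊆ L, IsLazyBurningSetHL L (L \ V) ∧
      3 * Fintype.card X ≤ #V + 2 + Nat.log 2 (Fintype.card X) := by
  induction hk : Fintype.card X - #(symsOf U) using Nat.strong_induction_on generalizing U with
  | _ k ih =>
  have hsyms := card_le_univ (symsOf U)
  obtain hfull | hlt := hsyms.eq_or_lt
  · refine ⟨U, hUL, hU, ?_⟩
    have := hsat.card_rowsOf hL hne
    have := hsat.card_colsOf hL hne
    rw [← hfull]
    unfold lineCount at hcount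
    omega
  obtain ⟨V, hVL, hV, hVsat, hVcount, hdouble⟩ :=
    hL.exists_saturated_doubling hn hUL hU hsat hne hlt
  have hpos : 0 < #(symsOf U) := card_pos.2 (hne.image _)
  have hlog : Nat.log 2 #(symsOf U) + 1 ≤ Nat.log 2 #(symsOf V) := by
    rw [← Nat.log_mul_base one_lt_two hpos.ne']
    exact Nat.log_mono_right (by omega)
  have hVne : V.Nonempty := (card_pos.1 (by omega : 0 < #(symsOf V))).of_image
  exact ih _ (by have := card_le_univ (symsOf V); omega) hVL hV hVsat hVne (by omega) rfl

theorem IsLatin.lbHL_add_le (hL : IsLatin L) (hn : 2 ≤ Fintype.card X) :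
    lbHL L + 3 * Fintype.card X ≤ Fintype.card X ^ 2 + 2 + Nat.log 2 (Fintype.card X) := by
  obtain ⟨x⟩ : Nonempty X := Fintype.card_pos_iff.1 (by omega)
  have he := hL.sym_mem x x
  have hburn : IsLazyBurningSetHL L (L \ {(x, x, hL.sym x x)}) := by
    simpa using hL.isLazyBurningSetHL_sdiff_insert hn (U := ∅) (by simpa using isLazyBurningSetHL_self L) he
      (by simp [lineCount, rowsOf, colsOf, symsOf])
  obtain ⟨U, hU₀, hUL, hU, hsat, hcount⟩ := hL.exists_saturated_superset hn
    (singleton_subset_iff.2 he) hburn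
  obtain ⟨V, hVL, hV, hVcount⟩ := hL.exists_burning_sdiff_of_isSaturated hn hUL hU hsat
    ⟨_, hU₀ (mem_singleton_self _)⟩
    (by rw [lineCount_singleton, card_singleton] at hcount; omega)
  have := lbHL_le hV
  rw [card_sdiff_of_subset hVL, hL.card_eq] at this
  have := card_le_card hVL
  rw [hL.card_eq] at this
  omega

end UpperBound

theorem stmt10 {n : ℕ} (hn : 2 ≤ n) (L : Finset (Entry (Fin n))) (hL : IsLatin L) :
    (n : ℤ) ^ 2 - 3 * n + 3 ≤ (lbHL L : ℤ) ∧
      (lbHL L : ℤ) ≤ (n : ℤ) ^ 2 - 3 * n + 2 + Nat.log 2 n := by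
  have hcard : Fintype.card (Fin n) = n := Fintype.card_fin n
  have hlower := hL.card_sq_add_three_le_lbHL (by simpa using hn)
  have hupper := hL.lbHL_add_le (by simpa using hn)
  rw [hcard] at hlower hupper
  zify at hlower hupper
  constructor <;> linarith
end

section
/- Let L be a Latin square of order n and let H^L be its 3-uniform hypergraph. Let R*, C*, and S* be sets of row-lines, column-lines, and symbol-lines of L respectively, and suppose at least two of the three sets are nonempty. Set B = R* ∪ C* ∪ S*. Then there is a subsquare N of L that intersects every line in B and is contained in every subsquare of L intersecting every line in B, and the closure of B under lazy burning in H^L is exactly the set of lines of L that intersect N. -/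
open Finset

lemma fin3_cases (i : Fin 3) : i = 0 ∨ i = 1 ∨ i = 2 := by fin_cases i <;> simp

lemma onLine_iff {X : Type*} (e : Entry X) (ℓ : Line X) :
    onLine e ℓ ↔ ℓ = (0, e.1) ∨ ℓ = (1, e.2.1) ∨ ℓ = (2, e.2.2) := by
  obtain ⟨t, x⟩ := ℓ
  fin_cases t <;> simp [onLine, Prod.ext_iff, eq_comm]
theorem stmt14 {n : ℕ} (L : Finset (Entry (Fin n))) (hL : IsLatin L)
    (Rs Cs Ss : Finset (Fin n))
    (h2 : (Rs.Nonempty ∧ Cs.Nonempty) ∨ (Rs.Nonempty ∧ Ss.Nonempty) ∨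
      (Cs.Nonempty ∧ Ss.Nonempty))
    (B : Finset (Line (Fin n)))
    (hB : B = Rs.image (fun r => ((0 : Fin 3), r)) ∪ Cs.image (fun c => ((1 : Fin 3), c)) ∪
      Ss.image (fun s => ((2 : Fin 3), s))) :
    ∃ N : Finset (Entry (Fin n)), IsSubsquare L N ∧
      (∀ ℓ ∈ B, ∃ e ∈ N, onLine e ℓ) ∧
      (∀ T : Finset (Entry (Fin n)), IsSubsquare L T →
        (∀ ℓ ∈ B, ∃ e ∈ T, onLine e ℓ) → N ⊆ T) ∧
      (∀ ℓ : Line (Fin n), BurnedH3 L B ℓ ↔ ∃ e ∈ N, onLine e ℓ) := by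
  classical
  obtain ⟨hrc, hrs, hcs⟩ := hL
  set sof : Fin n → Fin n → Fin n := fun r c => (hrc r c).choose with hsofdef
  have sof_mem : ∀ r c, (r, c, sof r c) ∈ L := fun r c => (hrc r c).choose_spec.1
  have sof_uniq : ∀ r c s, (r, c, s) ∈ L → s = sof r c :=
    fun r c s h => (hrc r c).choose_spec.2 s h
  set cof : Fin n → Fin n → Fin n := fun r s => (hrs r s).choose with hcofdef
  have cof_mem : ∀ r s, (r, cof r s, s) ∈ L := fun r s => (hrs r s).choose_spec.1
  have cof_uniq : ∀ r s c, (r, c, s) ∈ L → c = cof r s :=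
    fun r s c h => (hrs r s).choose_spec.2 c h
  set rof : Fin n → Fin n → Fin n := fun c s => (hcs c s).choose with hrofdef
  have rof_mem : ∀ c s, (rof c s, c, s) ∈ L := fun c s => (hcs c s).choose_spec.1
  have rof_uniq : ∀ c s r, (r, c, s) ∈ L → r = rof c s :=
    fun c s r h => (hcs c s).choose_spec.2 r h
  set Rh : Finset (Fin n) := univ.filter (fun r => BurnedH3 L B ((0:Fin 3), r)) with hRhdef
  set Ch : Finset (Fin n) := univ.filter (fun c => BurnedH3 L B ((1:Fin 3), c)) with hChdef
  set Sh : Finset (Fin n) := univ.filter (fun s => BurnedH3 L B ((2:Fin 3), s)) with hShdef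
  have memRh : ∀ r, r ∈ Rh ↔ BurnedH3 L B ((0:Fin 3), r) := fun r => by
    simp [hRhdef]
  have memCh : ∀ c, c ∈ Ch ↔ BurnedH3 L B ((1:Fin 3), c) := fun c => by
    simp [hChdef]
  have memSh : ∀ s, s ∈ Sh ↔ BurnedH3 L B ((2:Fin 3), s) := fun s => by
    simp [hShdef]
  -- closure properties
  have clS : ∀ r c, r ∈ Rh → c ∈ Ch → sof r c ∈ Sh := by
    intro r c hr hc
    rw [memSh]
    refine BurnedH3.prop (r, c, sof r c) (sof_mem r c) (Or.inr (Or.inr ⟨rfl, rfl⟩)) ?_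
    intro ℓ' hon hne
    rcases (onLine_iff _ _).1 hon with h | h | h
    · subst h; exact (memRh r).1 hr
    · subst h; exact (memCh c).1 hc
    · exact absurd h hne
  have clC : ∀ r s, r ∈ Rh → s ∈ Sh → cof r s ∈ Ch := by
    intro r s hr hs
    rw [memCh]
    refine BurnedH3.prop (r, cof r s, s) (cof_mem r s) (Or.inr (Or.inl ⟨rfl, rfl⟩)) ?_
    intro ℓ' hon hne
    rcases (onLine_iff _ _).1 hon with h | h | h
    · subst h; exact (memRh r).1 hr
    · exact absurd h hne
    · subst h; exact (memSh s).1 hs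
  have clR : ∀ c s, c ∈ Ch → s ∈ Sh → rof c s ∈ Rh := by
    intro c s hc hs
    rw [memRh]
    refine BurnedH3.prop (rof c s, c, s) (rof_mem c s) (Or.inl ⟨rfl, rfl⟩) ?_
    intro ℓ' hon hne
    rcases (onLine_iff _ _).1 hon with h | h | h
    · exact absurd h hne
    · subst h; exact (memCh c).1 hc
    · subst h; exact (memSh s).1 hs
  have hBr : ∀ r ∈ Rs, r ∈ Rh := by
    intro r hr
    rw [memRh]
    exact BurnedH3.init (by
      rw [hB]; exact mem_union_left _ (mem_union_left _ (mem_image_of_mem _ hr)))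
  have hBc : ∀ c ∈ Cs, c ∈ Ch := by
    intro c hc
    rw [memCh]
    exact BurnedH3.init (by
      rw [hB]; exact mem_union_left _ (mem_union_right _ (mem_image_of_mem _ hc)))
  have hBs : ∀ s ∈ Ss, s ∈ Sh := by
    intro s hs
    rw [memSh]
    exact BurnedH3.init (by
      rw [hB]; exact mem_union_right _ (mem_image_of_mem _ hs))
  have hne : Rh.Nonempty ∧ Ch.Nonempty ∧ Sh.Nonempty := by
    rcases h2 with ⟨⟨r, hr⟩, ⟨c, hc⟩⟩ | ⟨⟨r, hr⟩, ⟨s, hs⟩⟩ | ⟨⟨c, hc⟩, ⟨s, hs⟩⟩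
    · have hr' := hBr r hr; have hc' := hBc c hc
      exact ⟨⟨r, hr'⟩, ⟨c, hc'⟩, ⟨_, clS r c hr' hc'⟩⟩
    · have hr' := hBr r hr; have hs' := hBs s hs
      exact ⟨⟨r, hr'⟩, ⟨_, clC r s hr' hs'⟩, ⟨s, hs'⟩⟩
    · have hc' := hBc c hc; have hs' := hBs s hs
      exact ⟨⟨_, clR c s hc' hs'⟩, ⟨c, hc'⟩, ⟨s, hs'⟩⟩
  obtain ⟨hRne, hCne, hSne⟩ := hne
  have cardCS : Ch.card = Sh.card := by
    obtain ⟨r, hr⟩ := hRne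
    refine le_antisymm ?_ ?_
    · refine Finset.card_le_card_of_injOn (fun c => sof r c) (fun c hc => clS r c hr hc) ?_
      intro c1 h1 c2 h2 he
      have he' : sof r c1 = sof r c2 := he
      have e1 := sof_mem r c1
      rw [he'] at e1
      exact (cof_uniq r (sof r c2) c1 e1).trans (cof_uniq r (sof r c2) c2 (sof_mem r c2)).symm
    · refine Finset.card_le_card_of_injOn (fun s => cof r s) (fun s hs => clC r s hr hs) ?_
      intro s1 h1 s2 h2 he
      have he' : cof r s1 = cof r s2 := he
      have e1 := cof_mem r s1
      rw [he'] at e1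
      exact (sof_uniq r (cof r s2) s1 e1).trans (sof_uniq r (cof r s2) s2 (cof_mem r s2)).symm
  have cardRS : Rh.card = Sh.card := by
    obtain ⟨c, hc⟩ := hCne
    refine le_antisymm ?_ ?_
    · refine Finset.card_le_card_of_injOn (fun r => sof r c) (fun r hr => clS r c hr hc) ?_
      intro r1 h1 r2 h2 he
      have he' : sof r1 c = sof r2 c := he
      have e1 := sof_mem r1 c
      rw [he'] at e1
      exact (rof_uniq c (sof r2 c) r1 e1).trans (rof_uniq c (sof r2 c) r2 (sof_mem r2 c)).symm
    · refine Finset.card_le_card_of_injOn (fun s => rof c s) (fun s hs => clR c s hc hs) ?_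
      intro s1 h1 s2 h2 he
      have he' : rof c s1 = rof c s2 := he
      have e1 := rof_mem c s1
      rw [he'] at e1
      exact (sof_uniq (rof c s2) c s1 e1).trans (sof_uniq (rof c s2) c s2 (rof_mem c s2)).symm
  set N : Finset (Entry (Fin n)) :=
    L.filter (fun e => e.1 ∈ Rh ∧ e.2.1 ∈ Ch ∧ e.2.2 ∈ Sh) with hNdef
  have memN : ∀ e, e ∈ N ↔ e ∈ L ∧ e.1 ∈ Rh ∧ e.2.1 ∈ Ch ∧ e.2.2 ∈ Sh := fun e => by
    simp [hNdef]
  have hsub : IsSubsquare L N := by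
    refine ⟨Rh, Ch, Sh, cardRS.trans cardCS.symm, cardCS, rfl, ?_, ?_, ?_⟩
    · intro r hr c hc
      refine ⟨sof r c, ⟨clS r c hr hc, (memN _).2 ⟨sof_mem r c, hr, hc, clS r c hr hc⟩⟩, ?_⟩
      rintro s ⟨hs1, hs2⟩
      exact sof_uniq r c s ((memN _).1 hs2).1
    · intro r hr s hs
      refine ⟨cof r s, ⟨clC r s hr hs, (memN _).2 ⟨cof_mem r s, hr, clC r s hr hs, hs⟩⟩, ?_⟩
      rintro c ⟨hc1, hc2⟩
      exact cof_uniq r s c ((memN _).1 hc2).1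
    · intro c hc s hs
      refine ⟨rof c s, ⟨clR c s hc hs, (memN _).2 ⟨rof_mem c s, clR c s hc hs, hc, hs⟩⟩, ?_⟩
      rintro r ⟨hr1, hr2⟩
      exact rof_uniq c s r ((memN _).1 hr2).1
  have burned_to_N : ∀ ℓ, BurnedH3 L B ℓ → ∃ e ∈ N, onLine e ℓ := by
    intro ℓ hℓ
    obtain ⟨t, x⟩ := ℓ
    rcases fin3_cases t with rfl | rfl | rfl
    · obtain ⟨c, hc⟩ := hCne
      have hr : x ∈ Rh := (memRh x).2 hℓ
      exact ⟨(x, c, sof x c), (memN _).2 ⟨sof_mem x c, hr, hc, clS x c hr hc⟩,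
        Or.inl ⟨rfl, rfl⟩⟩
    · obtain ⟨r, hr⟩ := hRne
      have hc : x ∈ Ch := (memCh x).2 hℓ
      exact ⟨(r, x, sof r x), (memN _).2 ⟨sof_mem r x, hr, hc, clS r x hr hc⟩,
        Or.inr (Or.inl ⟨rfl, rfl⟩)⟩
    · obtain ⟨r, hr⟩ := hRne
      have hs : x ∈ Sh := (memSh x).2 hℓ
      exact ⟨(r, cof r x, x), (memN _).2 ⟨cof_mem r x, hr, clC r x hr hs, hs⟩,
        Or.inr (Or.inr ⟨rfl, rfl⟩)⟩
  have N_to_burned : ∀ ℓ, (∃ e ∈ N, onLine e ℓ) → BurnedH3 L B ℓ := by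
    rintro ℓ ⟨e, heN, hon⟩
    obtain ⟨heL, hr, hc, hs⟩ := (memN e).1 heN
    rcases (onLine_iff e ℓ).1 hon with rfl | rfl | rfl
    · exact (memRh _).1 hr
    · exact (memCh _).1 hc
    · exact (memSh _).1 hs
  have hmin : ∀ T, IsSubsquare L T → (∀ ℓ ∈ B, ∃ e ∈ T, onLine e ℓ) → N ⊆ T := by
    rintro T ⟨RT, CT, ST, hc1, hc2, hTeq, p1, p2, p3⟩ hTB
    have memT : ∀ e, e ∈ T ↔ e ∈ L ∧ e.1 ∈ RT ∧ e.2.1 ∈ CT ∧ e.2.2 ∈ ST := fun e => by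
      rw [hTeq]; simp
    have hRT : ∀ r ∈ Rs, r ∈ RT := by
      intro r hr
      obtain ⟨e, heT, hon⟩ := hTB ((0:Fin 3), r)
        (by rw [hB]; exact mem_union_left _ (mem_union_left _ (mem_image_of_mem _ hr)))
      rcases hon with ⟨_, h⟩ | ⟨h, _⟩ | ⟨h, _⟩
      · have h' := ((memT e).1 heT).2.1; rwa [h] at h'
      · exact absurd h (by simp)
      · exact absurd h (by simp)
    have hCT : ∀ c ∈ Cs, c ∈ CT := by
      intro c hc
      obtain ⟨e, heT, hon⟩ := hTB ((1:Fin 3), c)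
        (by rw [hB]; exact mem_union_left _ (mem_union_right _ (mem_image_of_mem _ hc)))
      rcases hon with ⟨h, _⟩ | ⟨_, h⟩ | ⟨h, _⟩
      · exact absurd h (by simp)
      · have h' := ((memT e).1 heT).2.2.1; rwa [h] at h'
      · exact absurd h (by simp)
    have hST : ∀ s ∈ Ss, s ∈ ST := by
      intro s hs
      obtain ⟨e, heT, hon⟩ := hTB ((2:Fin 3), s)
        (by rw [hB]; exact mem_union_right _ (mem_image_of_mem _ hs))
      rcases hon with ⟨h, _⟩ | ⟨h, _⟩ | ⟨_, h⟩
      · exact absurd h (by simp)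
      · exact absurd h (by simp)
      · have h' := ((memT e).1 heT).2.2.2; rwa [h] at h'
    have key : ∀ ℓ, BurnedH3 L B ℓ →
        (ℓ.1 = 0 → ℓ.2 ∈ RT) ∧ (ℓ.1 = 1 → ℓ.2 ∈ CT) ∧ (ℓ.1 = 2 → ℓ.2 ∈ ST) := by
      intro ℓ hℓ
      induction hℓ with
      | @init ℓ hmem =>
        rw [hB] at hmem
        rcases mem_union.1 hmem with hm | hm
        · rcases mem_union.1 hm with hm' | hm'
          · obtain ⟨r, hr, rfl⟩ := mem_image.1 hm'
            exact ⟨fun _ => hRT r hr, fun h => absurd h (by simp),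
              fun h => absurd h (by simp)⟩
          · obtain ⟨c, hc, rfl⟩ := mem_image.1 hm'
            exact ⟨fun h => absurd h (by simp), fun _ => hCT c hc,
              fun h => absurd h (by simp)⟩
        · obtain ⟨s, hs, rfl⟩ := mem_image.1 hm
          exact ⟨fun h => absurd h (by simp), fun h => absurd h (by simp),
            fun _ => hST s hs⟩
      | @prop ℓ e heL hon hburn ih =>
        obtain ⟨r, c, s⟩ := e
        have hTsubL : T ⊆ L := by rw [hTeq]; exact filter_subset _ _
        rcases (onLine_iff _ ℓ).1 hon with rfl | rfl | rfl
        · have hcC : c ∈ CT :=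
            (ih ((1:Fin 3), c) (Or.inr (Or.inl ⟨rfl, rfl⟩)) (by simp [Prod.ext_iff])).2.1 rfl
          have hsS : s ∈ ST :=
            (ih ((2:Fin 3), s) (Or.inr (Or.inr ⟨rfl, rfl⟩)) (by simp [Prod.ext_iff])).2.2 rfl
          obtain ⟨r', ⟨hr'R, hr'T⟩, -⟩ := p3 c hcC s hsS
          have hre : r' = r := (hcs c s).unique (hTsubL hr'T) heL
          exact ⟨fun _ => hre ▸ hr'R, fun h => absurd h (by simp),
            fun h => absurd h (by simp)⟩
        · have hrR : r ∈ RT :=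
            (ih ((0:Fin 3), r) (Or.inl ⟨rfl, rfl⟩) (by simp [Prod.ext_iff])).1 rfl
          have hsS : s ∈ ST :=
            (ih ((2:Fin 3), s) (Or.inr (Or.inr ⟨rfl, rfl⟩)) (by simp [Prod.ext_iff])).2.2 rfl
          obtain ⟨c', ⟨hc'C, hc'T⟩, -⟩ := p2 r hrR s hsS
          have hce : c' = c := (hrs r s).unique (hTsubL hc'T) heL
          exact ⟨fun h => absurd h (by simp), fun _ => hce ▸ hc'C,
            fun h => absurd h (by simp)⟩
        · have hrR : r ∈ RT :=
            (ih ((0:Fin 3), r) (Or.inl ⟨rfl, rfl⟩) (by simp [Prod.ext_iff])).1 rfl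
          have hcC : c ∈ CT :=
            (ih ((1:Fin 3), c) (Or.inr (Or.inl ⟨rfl, rfl⟩)) (by simp [Prod.ext_iff])).2.1 rfl
          obtain ⟨s', ⟨hs'S, hs'T⟩, -⟩ := p1 r hrR c hcC
          have hse : s' = s := (hrc r c).unique (hTsubL hs'T) heL
          exact ⟨fun h => absurd h (by simp), fun h => absurd h (by simp),
            fun _ => hse ▸ hs'S⟩
    intro e heN
    obtain ⟨heL, hr, hc, hs⟩ := (memN e).1 heN
    rw [memT]
    exact ⟨heL, (key _ ((memRh _).1 hr)).1 rfl, (key _ ((memCh _).1 hc)).2.1 rfl,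
      (key _ ((memSh _).1 hs)).2.2 rfl⟩
  exact ⟨N, hsub, fun ℓ hℓ => burned_to_N ℓ (BurnedH3.init hℓ), hmin,
    fun ℓ => ⟨burned_to_N ℓ, N_to_burned ℓ⟩⟩
end

section
/- Let G be a finite group and let α be the minimum cardinality of a generating set of G. Then the lazy burning number of the 3-uniform hypergraph of the Cayley table Latin square L(G) satisfies b_L(H^{L(G)}) = α + 2. -/
open Finset

section Aux

variable {G : Type*} [Group G] [Fintype G] [DecidableEq G]

lemma onLine_iff_s19 (g h s : G) (ℓ : Line G) :
    onLine (g, h, s) ℓ ↔ ℓ = (0, g) ∨ ℓ = (1, h) ∨ ℓ = (2, s) := by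
  obtain ⟨t, x⟩ := ℓ
  simp only [onLine, Prod.mk.injEq]
  constructor
  · rintro (⟨h1, h2⟩ | ⟨h1, h2⟩ | ⟨h1, h2⟩) <;> simp_all
  · rintro (⟨h1, h2⟩ | ⟨h1, h2⟩ | ⟨h1, h2⟩) <;> simp_all

lemma line_ne_of_tag {t t' : Fin 3} (h : t ≠ t') (x y : G) : ((t, x) : Line G) ≠ (t', y) :=
  fun hc => h (congrArg Prod.fst hc)

lemma mem_LG {LG : Finset (Entry G)}
    (hLG : LG = Finset.univ.filter (fun e => e.1 * e.2.1 = e.2.2)) (g h s : G) :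
    (g, h, s) ∈ LG ↔ g * h = s := by subst hLG; simp

lemma burn_sym {LG : Finset (Entry G)}
    (hLG : LG = Finset.univ.filter (fun e => e.1 * e.2.1 = e.2.2)) {S : Finset (Line G)}
    {g h : G} (hr : BurnedH3 LG S (0, g)) (hc : BurnedH3 LG S (1, h)) :
    BurnedH3 LG S (2, g * h) := by
  refine BurnedH3.prop (g, h, g * h) ((mem_LG hLG _ _ _).2 rfl)
    ((onLine_iff_s19 ..).2 (Or.inr (Or.inr rfl))) ?_
  intro ℓ' hon hne
  rcases (onLine_iff_s19 ..).1 hon with rfl | rfl | rfl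
  · exact hr
  · exact hc
  · exact absurd rfl hne

lemma burn_col {LG : Finset (Entry G)}
    (hLG : LG = Finset.univ.filter (fun e => e.1 * e.2.1 = e.2.2)) {S : Finset (Line G)}
    {g s : G} (hr : BurnedH3 LG S (0, g)) (hs : BurnedH3 LG S (2, s)) :
    BurnedH3 LG S (1, g⁻¹ * s) := by
  refine BurnedH3.prop (g, g⁻¹ * s, s) ((mem_LG hLG _ _ _).2 (by group))
    ((onLine_iff_s19 ..).2 (Or.inr (Or.inl rfl))) ?_
  intro ℓ' hon hne
  rcases (onLine_iff_s19 ..).1 hon with rfl | rfl | rfl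
  · exact hr
  · exact absurd rfl hne
  · exact hs

lemma burn_row {LG : Finset (Entry G)}
    (hLG : LG = Finset.univ.filter (fun e => e.1 * e.2.1 = e.2.2)) {S : Finset (Line G)}
    {h s : G} (hc : BurnedH3 LG S (1, h)) (hs : BurnedH3 LG S (2, s)) :
    BurnedH3 LG S (0, s * h⁻¹) := by
  refine BurnedH3.prop (s * h⁻¹, h, s) ((mem_LG hLG _ _ _).2 (by group))
    ((onLine_iff_s19 ..).2 (Or.inl rfl)) ?_
  intro ℓ' hon hne
  rcases (onLine_iff_s19 ..).1 hon with rfl | rfl | rfl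
  · exact absurd rfl hne
  · exact hc
  · exact hs

lemma upper_burn {LG : Finset (Entry G)}
    (hLG : LG = Finset.univ.filter (fun e => e.1 * e.2.1 = e.2.2))
    (A : Finset G) (hA : Subgroup.closure (A : Set G) = ⊤) :
    IsLazyBurningSetH3 LG
      (insert ((0 : Fin 3), (1 : G))
        (insert ((1 : Fin 3), (1 : G)) (A.image (fun a => ((0 : Fin 3), a))))) := by
  set S : Finset (Line G) :=
    insert ((0 : Fin 3), (1 : G))
      (insert ((1 : Fin 3), (1 : G)) (A.image (fun a => ((0 : Fin 3), a)))) with hSdef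
  have hr1 : BurnedH3 LG S (0, 1) := .init (by simp [hSdef])
  have hc1 : BurnedH3 LG S (1, 1) := .init (by simp [hSdef])
  have symToCol : ∀ x : G, BurnedH3 LG S (2, x) → BurnedH3 LG S (1, x) := by
    intro x hx
    have := burn_col hLG hr1 hx
    simpa using this
  have symToRow : ∀ x : G, BurnedH3 LG S (2, x) → BurnedH3 LG S (0, x) := by
    intro x hx
    have := burn_row hLG hc1 hx
    simpa using this
  have key : ∀ x : G, BurnedH3 LG S (2, x) := by
    intro x
    have hx : x ∈ Subgroup.closure (A : Set G) := by rw [hA]; trivial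
    induction hx using Subgroup.closure_induction with
    | mem a ha =>
      have hrA : BurnedH3 LG S (0, a) := .init (by simp [hSdef]; tauto)
      have := burn_sym hLG hrA hc1
      simpa using this
    | one =>
      have := burn_sym hLG hr1 hc1
      simpa using this
    | mul x y hx hy px py =>
      exact burn_sym hLG (symToRow x px) (symToCol y py)
    | inv x hx px =>
      have hrow : BurnedH3 LG S (0, x⁻¹) := by
        have h1 : BurnedH3 LG S (2, (1 : G)) := by
          have := burn_sym hLG hr1 hc1; simpa using this
        have := burn_row hLG (symToCol x px) h1
        simpa using this
      have := burn_sym hLG hrow hc1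
      simpa using this
  intro ℓ
  obtain ⟨t, x⟩ := ℓ
  fin_cases t
  · exact symToRow x (key x)
  · exact symToCol x (key x)
  · exact key x

lemma exists_minA (α : ℕ)
    (hα : α = sInf {k | ∃ s : Finset G, s.card = k ∧ Subgroup.closure (s : Set G) = ⊤}) :
    ∃ A : Finset G, A.card = α ∧ Subgroup.closure (A : Set G) = ⊤ ∧ (1 : G) ∉ A := by
  have hne : {k | ∃ s : Finset G, s.card = k ∧ Subgroup.closure (s : Set G) = ⊤}.Nonempty :=
    ⟨(Finset.univ : Finset G).card, Finset.univ, rfl, by simp⟩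
  obtain ⟨A, hcard, hcl⟩ := Nat.sInf_mem hne
  have hcl' : Subgroup.closure ((A.erase 1 : Finset G) : Set G) = ⊤ := by
    rw [eq_top_iff, ← hcl]
    apply (Subgroup.closure_le _).2
    intro x hx
    by_cases hx1 : x = 1
    · subst hx1; exact one_mem _
    · exact Subgroup.subset_closure (by simp [hx, hx1])
  have h1 : α ≤ (A.erase 1).card := by
    rw [hα]; exact Nat.sInf_le ⟨A.erase 1, rfl, hcl'⟩
  have h2 : (A.erase 1).card ≤ α := le_trans (Finset.card_erase_le) (le_of_eq (hα ▸ hcard))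
  exact ⟨A.erase 1, le_antisymm h2 h1, hcl', fun h => (Finset.mem_erase.1 h).1 rfl⟩

/-- Map each line to a subgroup-generator candidate. -/
def phi (a b : G) (ℓ : Line G) : G :=
  if ℓ.1 = 0 then a⁻¹ * ℓ.2 else if ℓ.1 = 1 then ℓ.2 * b⁻¹ else a⁻¹ * ℓ.2 * b⁻¹

lemma phi0 (a b x : G) : phi a b ((0 : Fin 3), x) = a⁻¹ * x := by simp [phi]

lemma phi1 (a b x : G) : phi a b ((1 : Fin 3), x) = x * b⁻¹ := by
  simp only [phi]; norm_num

lemma phi2 (a b x : G) : phi a b ((2 : Fin 3), x) = a⁻¹ * x * b⁻¹ := by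
  show (if _ then _ else _) = _
  rw [if_neg (by simp), if_neg (by simp)]

lemma burned_inv {LG : Finset (Entry G)}
    (hLG : LG = Finset.univ.filter (fun e => e.1 * e.2.1 = e.2.2))
    {S : Finset (Line G)} (a b : G) (H : Subgroup G)
    (hS : ∀ ℓ ∈ S, phi a b ℓ ∈ H) {ℓ : Line G} (hb : BurnedH3 LG S ℓ) :
    (ℓ.1 = 0 → a⁻¹ * ℓ.2 ∈ H) ∧ (ℓ.1 = 1 → ℓ.2 * b⁻¹ ∈ H) ∧
    (ℓ.1 = 2 → a⁻¹ * ℓ.2 * b⁻¹ ∈ H) := by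
  induction hb with
  | @init ℓ h =>
    have hp := hS _ h
    obtain ⟨t, x⟩ := ℓ
    refine ⟨fun ht => ?_, fun ht => ?_, fun ht => ?_⟩
    · rwa [show t = 0 from ht, phi0] at hp
    · rwa [show t = 1 from ht, phi1] at hp
    · rwa [show t = 2 from ht, phi2] at hp
  | @prop ℓ e he hon hall ih =>
    obtain ⟨g, h, s⟩ := e
    have hgh : g * h = s := (mem_LG hLG _ _ _).1 he
    rcases (onLine_iff_s19 ..).1 hon with rfl | rfl | rfl
    · have h1 := (ih (1, h) ((onLine_iff_s19 ..).2 (Or.inr (Or.inl rfl)))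
        (by exact fun hc => absurd (congrArg Prod.fst hc) (by simp))).2.1 rfl
      have h2 := (ih (2, s) ((onLine_iff_s19 ..).2 (Or.inr (Or.inr rfl)))
        (by exact fun hc => absurd (congrArg Prod.fst hc) (by simp))).2.2 rfl
      refine ⟨fun _ => ?_, fun ht => absurd ht (by simp), fun ht => absurd ht (by simp)⟩
      have hmem := H.mul_mem h2 (H.inv_mem h1)
      have heq : a⁻¹ * g = (a⁻¹ * s * b⁻¹) * (h * b⁻¹)⁻¹ := by rw [← hgh]; group
      rwa [← heq] at hmem
    · have h1 := (ih (0, g) ((onLine_iff_s19 ..).2 (Or.inl rfl))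
        (by exact fun hc => absurd (congrArg Prod.fst hc) (by simp))).1 rfl
      have h2 := (ih (2, s) ((onLine_iff_s19 ..).2 (Or.inr (Or.inr rfl)))
        (by exact fun hc => absurd (congrArg Prod.fst hc) (by simp))).2.2 rfl
      refine ⟨fun ht => absurd ht (by simp), fun _ => ?_, fun ht => absurd ht (by simp)⟩
      have hmem := H.mul_mem (H.inv_mem h1) h2
      have heq : h * b⁻¹ = (a⁻¹ * g)⁻¹ * (a⁻¹ * s * b⁻¹) := by rw [← hgh]; group
      rwa [← heq] at hmem
    · have h1 := (ih (0, g) ((onLine_iff_s19 ..).2 (Or.inl rfl))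
        (by exact fun hc => absurd (congrArg Prod.fst hc) (by simp))).1 rfl
      have h2 := (ih (1, h) ((onLine_iff_s19 ..).2 (Or.inr (Or.inl rfl)))
        (by exact fun hc => absurd (congrArg Prod.fst hc) (by simp))).2.1 rfl
      refine ⟨fun ht => absurd ht (by simp), fun ht => absurd ht (by simp), fun _ => ?_⟩
      have hmem := H.mul_mem h1 h2
      have heq : a⁻¹ * s * b⁻¹ = (a⁻¹ * g) * (h * b⁻¹) := by rw [← hgh]; group
      rwa [← heq] at hmem

lemma lower_aux {LG : Finset (Entry G)}
    (hLG : LG = Finset.univ.filter (fun e => e.1 * e.2.1 = e.2.2))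
    (α : ℕ)
    (hα : α = sInf {k | ∃ s : Finset G, s.card = k ∧ Subgroup.closure (s : Set G) = ⊤})
    {S : Finset (Line G)} (hS : IsLazyBurningSetH3 LG S)
    (a b : G) {x₁ x₂ : Line G} (h₁ : x₁ ∈ S) (h₂ : x₂ ∈ S) (hne : x₁ ≠ x₂)
    (hp₁ : phi a b x₁ = 1) (hp₂ : phi a b x₂ = 1) : α + 2 ≤ S.card := by
  set Gen : Finset G := ((S.erase x₁).erase x₂).image (phi a b) with hGen
  have hH : ∀ ℓ ∈ S, phi a b ℓ ∈ Subgroup.closure (Gen : Set G) := by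
    intro ℓ hℓ
    by_cases e1 : ℓ = x₁
    · rw [e1, hp₁]; exact one_mem _
    by_cases e2 : ℓ = x₂
    · rw [e2, hp₂]; exact one_mem _
    exact Subgroup.subset_closure (Finset.mem_coe.2 (Finset.mem_image_of_mem (phi a b)
      (Finset.mem_erase.2 ⟨e2, Finset.mem_erase.2 ⟨e1, hℓ⟩⟩)))
  have htop : Subgroup.closure (Gen : Set G) = ⊤ := by
    rw [Subgroup.eq_top_iff']
    intro x
    have hb := hS (0, a * x)
    have := (burned_inv hLG a b _ hH hb).1 rfl
    simpa using this
  have hαle : α ≤ Gen.card := by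
    rw [hα]; exact Nat.sInf_le ⟨Gen, rfl, htop⟩
  have hx₂' : x₂ ∈ S.erase x₁ := Finset.mem_erase.2 ⟨fun h => hne h.symm, h₂⟩
  have hcard : Gen.card ≤ S.card - 2 := by
    refine le_trans Finset.card_image_le ?_
    rw [Finset.card_erase_of_mem hx₂', Finset.card_erase_of_mem h₁]
    omega
  have h2card : 2 ≤ S.card := Finset.one_lt_card.2 ⟨x₁, h₁, x₂, h₂, hne⟩
  omega

lemma two_classes {LG : Finset (Entry G)}
    (hLG : LG = Finset.univ.filter (fun e => e.1 * e.2.1 = e.2.2))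
    {S : Finset (Line G)} (hS : IsLazyBurningSetH3 LG S) :
    (∃ a, ((0 : Fin 3), a) ∈ S ∧ ∃ b, ((1 : Fin 3), b) ∈ S) ∨
    (∃ a, ((0 : Fin 3), a) ∈ S ∧ ∃ s, ((2 : Fin 3), s) ∈ S) ∨
    (∃ b, ((1 : Fin 3), b) ∈ S ∧ ∃ s, ((2 : Fin 3), s) ∈ S) := by
  by_contra hno
  push_neg at hno
  obtain ⟨hno1, hno2, hno3⟩ := hno
  have key : ∀ ℓ, BurnedH3 LG S ℓ → ℓ ∈ S := by
    intro ℓ hb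
    induction hb with
    | init h => exact h
    | @prop ℓ e he hon hall ih =>
      exfalso
      obtain ⟨g, h, s⟩ := e
      rcases (onLine_iff_s19 ..).1 hon with rfl | rfl | rfl
      · exact hno3 h (ih (1, h) ((onLine_iff_s19 ..).2 (Or.inr (Or.inl rfl)))
          (by exact fun hc => absurd (congrArg Prod.fst hc) (by simp))) s (ih (2, s)
          ((onLine_iff_s19 ..).2 (Or.inr (Or.inr rfl))) (by exact fun hc => absurd (congrArg Prod.fst hc) (by simp)))
      · exact hno2 g (ih (0, g) ((onLine_iff_s19 ..).2 (Or.inl rfl))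
          (by exact fun hc => absurd (congrArg Prod.fst hc) (by simp))) s (ih (2, s)
          ((onLine_iff_s19 ..).2 (Or.inr (Or.inr rfl))) (by exact fun hc => absurd (congrArg Prod.fst hc) (by simp)))
      · exact hno1 g (ih (0, g) ((onLine_iff_s19 ..).2 (Or.inl rfl))
          (by exact fun hc => absurd (congrArg Prod.fst hc) (by simp))) h (ih (1, h)
          ((onLine_iff_s19 ..).2 (Or.inr (Or.inl rfl))) (by exact fun hc => absurd (congrArg Prod.fst hc) (by simp)))
  exact hno1 1 (key (0, 1) (hS (0, 1))) 1 (key (1, 1) (hS (1, 1)))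

end Aux

theorem stmt19 {G : Type*} [Group G] [Fintype G] [DecidableEq G]
    (LG : Finset (Entry G)) (hLG : LG = Finset.univ.filter (fun e => e.1 * e.2.1 = e.2.2))
    (α : ℕ)
    (hα : α = sInf {k | ∃ s : Finset G, s.card = k ∧ Subgroup.closure (s : Set G) = ⊤}) :
    lbH3 LG = α + 2 := by
  obtain ⟨A, hAcard, hAcl, hA1⟩ := exists_minA α hα
  set S0 : Finset (Line G) :=
    insert ((0 : Fin 3), (1 : G))
      (insert ((1 : Fin 3), (1 : G)) (A.image (fun a => ((0 : Fin 3), a)))) with hS0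
  have hburn : IsLazyBurningSetH3 LG S0 := upper_burn hLG A hAcl
  have hnotmem2 : ((1 : Fin 3), (1 : G)) ∉ A.image (fun a => ((0 : Fin 3), a)) := by simp
  have hnotmem1 : ((0 : Fin 3), (1 : G)) ∉
      insert ((1 : Fin 3), (1 : G)) (A.image (fun a => ((0 : Fin 3), a))) := by
    simp [hA1]
  have hS0card : S0.card = α + 2 := by
    rw [hS0, Finset.card_insert_of_notMem hnotmem1, Finset.card_insert_of_notMem hnotmem2,
      Finset.card_image_of_injective _ (fun a b h => congrArg Prod.snd h), hAcard]
  unfold lbH3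
  apply le_antisymm
  · exact Nat.sInf_le ⟨S0, hburn, hS0card⟩
  · apply le_csInf
    · exact ⟨α + 2, S0, hburn, hS0card⟩
    rintro k ⟨S, hS, rfl⟩
    rcases two_classes hLG hS with ⟨a, ha, b, hb⟩ | ⟨a, ha, s, hs⟩ | ⟨b, hb, s, hs⟩
    · exact lower_aux hLG α hα hS a b ha hb (by exact fun hc => absurd (congrArg Prod.fst hc) (by simp))
        (by rw [phi0]; group) (by rw [phi1]; group)
    · exact lower_aux hLG α hα hS a (a⁻¹ * s) ha hs (by exact fun hc => absurd (congrArg Prod.fst hc) (by simp))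
        (by rw [phi0]; group) (by rw [phi2]; group)
    · exact lower_aux hLG α hα hS (s * b⁻¹) b hb hs (by exact fun hc => absurd (congrArg Prod.fst hc) (by simp))
        (by rw [phi1]; group) (by rw [phi2]; group)
end
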